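/- arXiv:2205.07509 — 4 statements merged into one kernel-verified Lean document; each statement's English description precedes it below -/
import Mathlib

section
/- Let V be an 𝔏-module and m ∈ ℤ_{>0}. Suppose that for all r ∈ ℤ + 1/2, all s ∈ ℤ, and all v ∈ V one has Σ_{i=0}^{m} (-1)^i (m choose i) G_{r-i} L_{s+i} v = 0. Then for all r, t ∈ ℤ + 1/2, all s ∈ ℤ, and all v ∈ V one has Σ_{i=0}^{m} (-1)^i (m choose i) (s + i − 2t) G_{r-i} G_{s+t+i} v = 0. -/
/-- An `𝔏`-module: a complex vector space with operators `L m` (`m ∈ ℤ`) and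
`G k` (representing `G_{k+1/2}`, `k ∈ ℤ`) satisfying
`[L_m, L_n] = (n-m) L_{m+n}`, `[L_m, G_r] = (r - m/2) G_{m+r}` (with `r = k+1/2`),
and `G_r G_s + G_s G_r = 0`. -/
structure LModule (V : Type) [AddCommGroup V] [Module ℂ V] where
  L : ℤ → Module.End ℂ V
  G : ℤ → Module.End ℂ V
  hLL : ∀ m n : ℤ, L m * L n - L n * L m = ((n - m : ℤ) : ℂ) • L (m + n)
  hLG : ∀ m k : ℤ, L m * G k - G k * L m = (((2 * k + 1 - m : ℤ) : ℂ) / 2) • G (m + k)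
  hGG : ∀ k l : ℤ, G k * G l + G l * G k = 0

/-- if `Σ_{i=0}^m (-1)^i (m choose i) G_{r-i} L_{s+i} v = 0` for all
`r ∈ ℤ + 1/2` (here `r = k + 1/2`), `s ∈ ℤ`, `v ∈ V`, then
`Σ_{i=0}^m (-1)^i (m choose i) (s + i - 2t) G_{r-i} G_{s+t+i} v = 0` for all
`r, t ∈ ℤ + 1/2` (here `r = k + 1/2`, `t = l + 1/2`, so `s + i - 2t = s + i - 2l - 1`
and `G_{s+t+i} = G_{(s+l+i)+1/2}`), `s ∈ ℤ`, `v ∈ V`. -/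
theorem stmt3 {V : Type} [AddCommGroup V] [Module ℂ V] (M : LModule V) (m : ℕ) (hm : 0 < m)
    (H : ∀ (k s : ℤ) (v : V),
      ∑ i ∈ Finset.range (m + 1),
        ((-1 : ℂ) ^ i * (m.choose i : ℂ)) • ((M.G (k - i) * M.L (s + i)) v) = 0) :
    ∀ (k l s : ℤ) (v : V),
      ∑ i ∈ Finset.range (m + 1),
        ((-1 : ℂ) ^ i * (m.choose i : ℂ) * ((s + (i : ℤ) - 2 * l - 1 : ℤ) : ℂ)) •
          ((M.G (k - i) * M.G (s + l + i)) v) = 0 := by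
  intro k l s v
  have key : ∀ i ∈ Finset.range (m + 1),
      ((-1 : ℂ) ^ i * (m.choose i : ℂ) * ((s + (i : ℤ) - 2 * l - 1 : ℤ) : ℂ)) •
          ((M.G (k - i) * M.G (s + l + i)) v)
        = (-2 : ℂ) • (((-1 : ℂ) ^ i * (m.choose i : ℂ)) •
            ((M.G (k - i) * M.L (s + i)) (M.G l v)))
          + (-2 : ℂ) • (((-1 : ℂ) ^ i * (m.choose i : ℂ)) •
            (M.G l ((M.G (k - i) * M.L (s + i)) v))) := by
    intro i _
    set c : ℂ := (-1 : ℂ) ^ i * (m.choose i : ℂ) with hc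
    have e1 := congrArg (fun T : Module.End ℂ V => M.G (k - i) (T v)) (M.hLG (s + i) l)
    simp only [LinearMap.sub_apply, LinearMap.smul_apply, Module.End.mul_apply, map_sub,
      map_smul] at e1
    have e2 := congrArg (fun T : Module.End ℂ V => T (M.L (s + i) v)) (M.hGG (k - i) l)
    simp only [LinearMap.add_apply, Module.End.mul_apply, LinearMap.zero_apply] at e2
    have e3 : M.G (k - i) (M.G l (M.L (s + i) v))
        = - M.G l (M.G (k - i) (M.L (s + i) v)) := eq_neg_of_add_eq_zero_left e2
    have hAB : (((2 * l + 1 - (s + i) : ℤ) : ℂ) / 2) • M.G (k - i) (M.G (s + i + l) v)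
        = M.G (k - i) (M.L (s + i) (M.G l v)) + M.G l (M.G (k - i) (M.L (s + i) v)) := by
      rw [← e1, e3]; abel
    have hidx : s + l + (i : ℤ) = s + i + l := by ring
    have hcoef : c * ((s + (i : ℤ) - 2 * l - 1 : ℤ) : ℂ)
        = (-2 * c) * (((2 * l + 1 - (s + i) : ℤ) : ℂ) / 2) := by push_cast; ring
    rw [hidx, hcoef, ← smul_smul, Module.End.mul_apply, hAB, smul_add]
    simp only [Module.End.mul_apply, smul_smul]
  rw [Finset.sum_congr rfl key, Finset.sum_add_distrib, ← Finset.smul_sum, ← Finset.smul_sum]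
  have H2 := congrArg (M.G l) (H k s v)
  simp only [map_sum, map_smul, map_zero] at H2
  rw [H k s (M.G l v), H2]
  simp
end

section
/- Let V be a complex vector space with pairwise anticommuting linear operators G_r (r ∈ ℤ + 1/2), i.e. G_r G_s + G_s G_r = 0 for all r, s. Let m ∈ ℤ_{>0} and suppose that for all r, s ∈ ℤ + 1/2 and all v ∈ V one has Σ_{i=0}^{m} (-1)^i (m choose i) G_{r-i} G_{s+i} v = 0. Then for all r, s ∈ ℤ + 1/2 and all v ∈ V one has G_r G_s G_{s+1} G_{s+2} ⋯ G_{s+m} v = 0. -/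
/-!
Apply the hypothesis to `w = G_{s+1} ⋯ G_{s+m} v`. Anticommuting operators square to zero, so
for `1 ≤ i ≤ m` the operator `G_{s+i}` can be moved through the product to its own copy and
kills `w`. Only the term `i = 0` of the sum survives, and it is `G_r G_s w`.
-/

theorem eq_zero_of_add_self_eq_zero {M : Type*} [AddMonoid M] [IsAddTorsionFree M] {x : M}
    (h : x + x = 0) : x = 0 :=
  nsmul_right_injective two_ne_zero (by simpa only [two_nsmul, add_zero] using h)

theorem List.mul_prod_eq_zero_of_mem {R : Type*} [Ring R] {a : R} {L : List R} (ha : a ∈ L)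
    (hsq : a * a = 0) (hanti : ∀ b ∈ L, a * b + b * a = 0) : a * L.prod = 0 := by
  induction L with
  | nil => simp at ha
  | cons b L ih =>
    rw [List.prod_cons, ← mul_assoc]
    rcases List.mem_cons.mp ha with rfl | ha
    · rw [hsq, zero_mul]
    · rw [eq_neg_of_add_eq_zero_left (hanti b List.mem_cons_self), neg_mul, mul_assoc,
        ih ha fun c hc => hanti c (List.mem_cons_of_mem b hc), mul_zero, neg_zero]

theorem List.coe_nat_eq_map_cast (L : List ℕ) : (L : List ℤ) = L.map ((↑) : ℕ → ℤ) :=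
  List.flatMap_pure_eq_map _ L

theorem stmt5_general {V : Type} [AddCommGroup V] [Module ℂ V] (G : ℤ → Module.End ℂ V)
    (hGG : ∀ k l : ℤ, G k * G l + G l * G k = 0) (m : ℕ)
    (H : ∀ (k l : ℤ) (v : V),
      ∑ i ∈ Finset.range (m + 1),
        ((-1 : ℂ) ^ i * (m.choose i : ℂ)) • ((G (k - i) * G (l + i)) v) = 0) :
    ∀ (k l : ℤ) (v : V),
      (G k * ((List.range (m + 1)).map (fun i => G (l + i))).prod) v = 0 := by
  intro k l v
  have : IsAddTorsionFree (Module.End ℂ V) := .of_isTorsionFree ℂ _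
  set T : Module.End ℂ V := ((List.range m).map fun i : ℕ => G (l + (i + 1 : ℕ))).prod
  have hprod : (((List.range (m + 1)).map ((↑) : ℕ → ℤ)).map fun i => G (l + i)).prod =
      G l * T := by
    simp [T, List.range_succ_eq_map, Function.comp_def]
  have hT : ∀ i ∈ Finset.range (m + 1), i ≠ 0 → G (l + i) (T v) = 0 := by
    intro i hi hi0
    refine LinearMap.congr_fun (List.mul_prod_eq_zero_of_mem ?_
      (eq_zero_of_add_self_eq_zero (hGG _ _)) fun b hb => ?_) v
    · exact List.mem_map.mpr ⟨i - 1, List.mem_range.mpr (by grind), by congr; omega⟩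
    · obtain ⟨j, -, rfl⟩ := List.mem_map.mp hb
      exact hGG _ _
  have hsum := H k l (T v)
  rw [Finset.sum_eq_single_of_mem 0 (by simp) fun i hi hi0 => by
    rw [Module.End.mul_apply, hT i hi hi0, map_zero, smul_zero]] at hsum
  -- the index list in the statement is `List.range (m + 1)` coerced to `List ℤ`
  rw [List.coe_nat_eq_map_cast, hprod]
  simpa using hsum

/-- let `V` be a complex vector space with pairwise anticommuting
operators `G k` (representing `G_{k+1/2}`, `k ∈ ℤ`).  If
`Σ_{i=0}^m (-1)^i (m choose i) G_{r-i} G_{s+i} v = 0` for all `r = k + 1/2`,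
`s = l + 1/2 ∈ ℤ + 1/2` and `v ∈ V`, then
`G_r G_s G_{s+1} ⋯ G_{s+m} v = 0` for all `r = k + 1/2`, `s = l + 1/2` and `v`. -/
theorem stmt5 {V : Type} [AddCommGroup V] [Module ℂ V] (G : ℤ → Module.End ℂ V)
    (hGG : ∀ k l : ℤ, G k * G l + G l * G k = 0) (m : ℕ) (hm : 0 < m)
    (H : ∀ (k l : ℤ) (v : V),
      ∑ i ∈ Finset.range (m + 1),
        ((-1 : ℂ) ^ i * (m.choose i : ℂ)) • ((G (k - i) * G (l + i)) v) = 0) :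
    ∀ (k l : ℤ) (v : V),
      (G k * ((List.range (m + 1)).map (fun i => G (l + i))).prod) v = 0 :=
  stmt5_general G hGG m H
end

section
/- Let V be an 𝔏-module, let k ∈ ℤ with k ≥ 1, and let w ∈ V satisfy L_k w = L_{k+1} w = G_{k+1/2} w = 0. Then there exists N ∈ ℕ such that L_i w = 0 and G_{i-1/2} w = 0 for all integers i ≥ N. -/
/-!
The commutator relations show that the indices `m` with `L_m w = 0` are closed under
adding two *distinct* such indices, and that `L_m w = 0 = G_{j+1/2} w` forces
`G_{m+j+1/2} w = 0` unless `m = 2j+1`. Starting from `k` and `k+1`, sums of distinct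
annihilating indices fill the blocks `[n k + 1, n k + n - 1]` for `n ≥ 2`, which overlap
as soon as `n > k`; hence every `i ≥ (k+1)^2` is annihilating. Adding `k` to these indices
on the `G` side gives the half-integral statement.
-/

namespace LModule

variable {V : Type} [AddCommGroup V] [Module ℂ V] (M : LModule V) {w : V}

theorem L_add_apply_eq_zero {a b : ℤ} (hab : a ≠ b) (ha : M.L a w = 0) (hb : M.L b w = 0) :
    M.L (a + b) w = 0 := by
  have h := LinearMap.congr_fun (M.hLL a b) w
  simp only [LinearMap.sub_apply, Module.End.mul_apply, LinearMap.smul_apply,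
    ha, hb, map_zero, sub_zero] at h
  have hc : ((b - a : ℤ) : ℂ) ≠ 0 := by exact_mod_cast sub_ne_zero.mpr hab.symm
  exact (smul_eq_zero.mp h.symm).resolve_left hc

theorem G_add_apply_eq_zero {m j : ℤ} (hmj : 2 * j + 1 ≠ m) (hm : M.L m w = 0)
    (hj : M.G j w = 0) : M.G (m + j) w = 0 := by
  have h := LinearMap.congr_fun (M.hLG m j) w
  simp only [LinearMap.sub_apply, Module.End.mul_apply, LinearMap.smul_apply,
    hm, hj, map_zero, sub_zero] at h
  have hc : (((2 * j + 1 - m : ℤ) : ℂ) / 2) ≠ 0 :=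
    div_ne_zero (by exact_mod_cast sub_ne_zero.mpr hmj) two_ne_zero
  exact (smul_eq_zero.mp h.symm).resolve_left hc

end LModule

section DistinctAddClosed

variable {P : ℤ → Prop} (hP : ∀ a b, a ≠ b → P a → P b → P (a + b))
  {k : ℤ} (hk : 1 ≤ k) (h₀ : P k) (h₁ : P (k + 1))
include hP hk h₀ h₁

theorem mul_add_of_distinct_add_closed {n : ℤ} (hn : 2 ≤ n) :
    ∀ j : ℤ, 1 ≤ j → j ≤ n - 1 → P (n * k + j) := by
  induction n, hn using Int.leInduction with
  | base =>
    intro j hj1 hj2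
    obtain rfl : j = 1 := by omega
    convert hP k (k + 1) (by omega) h₀ h₁ using 1
    ring
  | succ m hm ih =>
    intro j hj1 hj2
    rcases lt_or_eq_of_le (show j ≤ m by omega) with hjm | rfl
    · convert hP k (m * k + j) (by nlinarith) h₀ (ih j hj1 (by omega)) using 1
      ring
    · -- `(j+1) k + j = (k+1) + (j k + (j-1))`
      convert hP (k + 1) (j * k + (j - 1)) (by nlinarith) h₁ (ih (j - 1) (by omega) le_rfl)
        using 1
      ring

theorem of_sq_le_of_distinct_add_closed {i : ℤ} (hi : (k + 1) ^ 2 ≤ i) : P i := by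
  have hk0 : 0 < k := by omega
  set n := (i - 1) / k
  set r := (i - 1) % k
  have hdiv : k * n + r = i - 1 := Int.mul_ediv_add_emod (i - 1) k
  have hr0 : 0 ≤ r := Int.emod_nonneg _ hk0.ne'
  have hrk : r < k := Int.emod_lt_of_pos _ hk0
  have hkn : k * (k + 1) < k * n := by nlinarith
  have hnk : k + 1 < n := lt_of_mul_lt_mul_left hkn hk0.le
  convert mul_add_of_distinct_add_closed hP hk h₀ h₁ (n := n) (by omega) (r + 1) (by omega)
    (by omega) using 1
  linarith

end DistinctAddClosed

/-- if `V` is an 𝔏-module, `k ≥ 1`, and `w ∈ V` satisfies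
`L_k w = L_{k+1} w = G_{k+1/2} w = 0` (here `G_{k+1/2}` is encoded as `G k`),
then there is `N ∈ ℕ` with `L_i w = 0` and `G_{i-1/2} w = 0` (encoded
`G (i-1) w = 0`) for all integers `i ≥ N`. -/
theorem stmt11 {V : Type} [AddCommGroup V] [Module ℂ V] (M : LModule V)
    (k : ℤ) (hk : 1 ≤ k) (w : V)
    (h1 : M.L k w = 0) (h2 : M.L (k + 1) w = 0) (h3 : M.G k w = 0) :
    ∃ N : ℕ, ∀ i : ℤ, (N : ℤ) ≤ i → M.L i w = 0 ∧ M.G (i - 1) w = 0 := by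
  have hL : ∀ i : ℤ, (k + 1) ^ 2 ≤ i → M.L i w = 0 := fun i =>
    of_sq_le_of_distinct_add_closed (fun _ _ hab ha hb => M.L_add_apply_eq_zero hab ha hb)
      hk h1 h2
  refine ⟨((k + 1) ^ 2 + k + 1).toNat, fun i hi => ?_⟩
  rw [Int.toNat_of_nonneg (by positivity)] at hi
  refine ⟨hL i (by linarith), ?_⟩
  have hG := M.G_add_apply_eq_zero (m := i - 1 - k) (by nlinarith) (hL _ (by linarith)) h3
  rwa [sub_add_cancel] at hG
end

section
/- For a, b, c₀ ∈ ℂ, the 𝔮-module A_{a,b,c₀} is simple if and only if a ∉ ℤ, or b ∉ {0, 1}, or c₀ ≠ 0. -/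
/-- A `𝔮`-module: a complex vector space with operators `L m`, `H m` (`m ∈ ℤ`),
`G k` (representing `G_{k+1/2}`, `k ∈ ℤ`) and a central operator `c`, subject to
the relations of the subalgebra `𝔮` of the `N = 2` Neveu–Schwarz algebra. -/
structure QModule (V : Type) [AddCommGroup V] [Module ℂ V] where
  L : ℤ → Module.End ℂ V
  H : ℤ → Module.End ℂ V
  G : ℤ → Module.End ℂ V
  c : Module.End ℂ V
  hcL : ∀ m : ℤ, L m * c = c * L m
  hcH : ∀ m : ℤ, H m * c = c * H m
  hcG : ∀ k : ℤ, G k * c = c * G k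
  hLL : ∀ m n : ℤ, L m * L n - L n * L m =
    ((n - m : ℤ) : ℂ) • L (m + n) +
      (if m + n = 0 then (((n ^ 3 - n : ℤ) : ℂ) / 12) else 0) • c
  hHH : ∀ m n : ℤ, H m * H n - H n * H m =
    (if m + n = 0 then ((m : ℂ) / 3) else 0) • c
  hLH : ∀ m n : ℤ, L m * H n - H n * L m = (n : ℂ) • H (m + n)
  hLG : ∀ m k : ℤ, L m * G k - G k * L m = (((2 * k + 1 - m : ℤ) : ℂ) / 2) • G (k + m)
  hHG : ∀ m k : ℤ, H m * G k - G k * H m = G (m + k)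
  hGG : ∀ k l : ℤ, G k * G l + G l * G k = 0

/-- A weight `𝔮`-module: the grading is over `(1/2)ℤ`, encoded by indexing the
weight spaces by `n : ℤ`, where `wt n` is the weight space of weight `n/2`. -/
structure WeightQModule (V : Type) [AddCommGroup V] [Module ℂ V] extends QModule V where
  wt : ℤ → Submodule ℂ V
  internal : DirectSum.IsInternal wt
  hLwt : ∀ m n : ℤ, ∀ v ∈ wt n, L m v ∈ wt (n + 2 * m)
  hHwt : ∀ m n : ℤ, ∀ v ∈ wt n, H m v ∈ wt (n + 2 * m)
  hGwt : ∀ k n : ℤ, ∀ v ∈ wt n, G k v ∈ wt (n + 2 * k + 1)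
  hcwt : ∀ n : ℤ, ∀ v ∈ wt n, c v ∈ wt n

/-- Cuspidal: the dimensions of all weight spaces are uniformly bounded. -/
def WeightQModule.IsCuspidal {V : Type} [AddCommGroup V] [Module ℂ V]
    (M : WeightQModule V) : Prop :=
  ∃ p : ℕ, ∀ n : ℤ, Module.rank ℂ (M.wt n) ≤ (p : Cardinal)

/-- A submodule of a weight `𝔮`-module: a subspace invariant under all the
operators which is the sum of its intersections with the weight spaces. -/
def WeightQModule.IsSub {V : Type} [AddCommGroup V] [Module ℂ V]
    (M : WeightQModule V) (W : Submodule ℂ V) : Prop :=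
  (∀ m : ℤ, ∀ x ∈ W, M.L m x ∈ W) ∧ (∀ m : ℤ, ∀ x ∈ W, M.H m x ∈ W) ∧
    (∀ k : ℤ, ∀ x ∈ W, M.G k x ∈ W) ∧ (∀ x ∈ W, M.c x ∈ W) ∧
    W = ⨆ n : ℤ, W ⊓ M.wt n

/-- Simple: nonzero with no nontrivial proper submodules. -/
def WeightQModule.IsSimple {V : Type} [AddCommGroup V] [Module ℂ V]
    (M : WeightQModule V) : Prop :=
  Nontrivial V ∧ ∀ W : Submodule ℂ V, M.IsSub W → W = ⊥ ∨ W = ⊤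

/-- The `L`-action of the module `A_{a,b,c₀}` on `ℤ →₀ ℂ` (basis `v_i = single i 1`):
`L_m v_i = (a + bm + i) v_{m+i}`. -/
noncomputable def qLab (a b : ℂ) (m : ℤ) : Module.End ℂ (ℤ →₀ ℂ) :=
  Finsupp.lsum ℂ (fun i : ℤ => (a + b * (m : ℂ) + (i : ℂ)) • Finsupp.lsingle (m + i))

/-- The `H`-action of the module `A_{a,b,c₀}`: `H_m v_i = c₀ v_{m+i}`.
(The operators `G_p` and `c` act as zero on `A_{a,b,c₀}`.) -/
noncomputable def qHc (c₀ : ℂ) (m : ℤ) : Module.End ℂ (ℤ →₀ ℂ) :=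
  Finsupp.lsum ℂ (fun i : ℤ => c₀ • Finsupp.lsingle (m + i))

/-- A subspace of `A_{a,b,c₀}` compatible with the grading: it equals the sum of
its intersections with the lines `ℂ v_i`. -/
def AGraded (W : Submodule ℂ (ℤ →₀ ℂ)) : Prop :=
  W = ⨆ i : ℤ, W ⊓ Submodule.span ℂ {Finsupp.single i (1 : ℂ)}

/-- A submodule of the 𝔮-module `A_{a,b,c₀}`: a subspace invariant under all the
operators (the operators `G_p` and `c` act as zero, so only invariance under the
`L`- and `H`-actions is nontrivial) which equals the sum of its intersections
with the lines `ℂ v_i`. -/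
def ASub (a b c₀ : ℂ) (W : Submodule ℂ (ℤ →₀ ℂ)) : Prop :=
  (∀ m : ℤ, ∀ x ∈ W, qLab a b m x ∈ W) ∧ (∀ m : ℤ, ∀ x ∈ W, qHc c₀ m x ∈ W) ∧
    AGraded W

/-!
If `a = n ∈ ℤ`, `b ∈ {0, 1}` and `c₀ = 0`, the coefficient `a + bm + i` of `L_m v_i` vanishes
whenever `i = -n` (for `b = 0`) or `m + i = -n` (for `b = 1`), so the span of `v_{-n}`,
respectively of all `v_i` with `i ≠ -n`, is a proper nonzero submodule.

Conversely, a nonzero graded submodule contains some `v_i`. If `c₀ ≠ 0`, the `H_m` move `v_i`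
to every `v_j`. Otherwise, to reach `v_j` from `v_i` through some `v_k`, note that the two
coefficients involved are affine in `k` with slopes `b` and `1 - b`, and their constant terms are
`a + i` and `a + j` when the slope vanishes; so unless `a ∈ ℤ` and `b ∈ {0, 1}`, each vanishes for
only finitely many `k`.
-/

open Finsupp

lemma qLab_single (a b : ℂ) (m i : ℤ) :
    qLab a b m (single i 1) = (a + b * m + i) • single (m + i) 1 := by
  simp [qLab, smul_single]

lemma qHc_single (c₀ : ℂ) (m i : ℤ) : qHc c₀ m (single i 1) = c₀ • single (m + i) 1 := by
  simp [qHc, smul_single]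

lemma qHc_zero (m : ℤ) : qHc 0 m = 0 := by
  ext; simp [qHc]

section Supported

variable {ι R : Type*} [Semiring R]

lemma Finsupp.single_one_mem_supported_iff [Nontrivial R] {s : Set ι} {i : ι} :
    single i (1 : R) ∈ supported R R s ↔ i ∈ s := by
  rw [supported_eq_span_single, single_mem_span_single]

lemma Finsupp.mapsTo_supported {s : Set ι} (T : Module.End R (ι →₀ R))
    (h : ∀ i ∈ s, T (single i 1) ∈ supported R R s) :
    ∀ x ∈ supported R R s, T x ∈ supported R R s := by
  intro x hx
  rw [supported_eq_span_single] at hx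
  refine Submodule.span_le (p := (supported R R s).comap T).2 ?_ hx
  rintro _ ⟨i, hi, rfl⟩
  exact h i hi

end Supported

lemma aGraded_supported (s : Set ℤ) : AGraded (supported ℂ ℂ s) := by
  refine le_antisymm ?_ (iSup_le fun i => inf_le_left)
  rw [supported_eq_span_single, Submodule.span_le]
  rintro _ ⟨i, hi, rfl⟩
  exact Submodule.mem_iSup_of_mem i
    ⟨Submodule.subset_span ⟨i, hi, rfl⟩, Submodule.mem_span_singleton_self _⟩

lemma AGraded.exists_single_one_mem {W : Submodule ℂ (ℤ →₀ ℂ)} (hW : AGraded W) (hne : W ≠ ⊥) :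
    ∃ i, single i (1 : ℂ) ∈ W := by
  by_contra! hno
  refine hne (hW.trans (iSup_eq_bot.2 fun i => eq_bot_iff.2 ?_))
  rintro x ⟨hxW, hx⟩
  obtain ⟨c, rfl⟩ := Submodule.mem_span_singleton.1 hx
  rcases eq_or_ne c 0 with rfl | hc
  · simp
  · exact absurd ((W.smul_mem_iff hc).1 hxW) (hno i)

lemma aSub_supported {a b : ℂ} {s : Set ℤ}
    (hs : ∀ m, ∀ i ∈ s, m + i ∉ s → a + b * m + i = 0) : ASub a b 0 (supported ℂ ℂ s) := by
  refine ⟨fun m => mapsTo_supported _ fun i hi => ?_, ?_, aGraded_supported s⟩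
  · rw [qLab_single]
    by_cases hmi : m + i ∈ s
    · exact Submodule.smul_mem _ _ (single_mem_supported ℂ 1 hmi)
    · rw [hs m i hi hmi, zero_smul]
      exact Submodule.zero_mem _
  · simp [qHc_zero]

/-- The coefficient of `v_j` in `L_{j-i} v_i`. -/
def qLabCoeff (a b : ℂ) (i j : ℤ) : ℂ := a + b * (j - i) + i

lemma single_one_mem_of_qLabCoeff_ne_zero {a b : ℂ} {W : Submodule ℂ (ℤ →₀ ℂ)}
    (hL : ∀ m, ∀ x ∈ W, qLab a b m x ∈ W) {i j : ℤ} (hi : single i (1 : ℂ) ∈ W)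
    (hij : qLabCoeff a b i j ≠ 0) : single j (1 : ℂ) ∈ W := by
  have := hL (j - i) _ hi
  rw [qLab_single, sub_add_cancel] at this
  push_cast at this
  exact (W.smul_mem_iff hij).1 this

lemma finite_setOf_mul_add_eq_zero {α β : ℂ} (h : α ≠ 0 ∨ β ≠ 0) :
    {k : ℤ | α * k + β = 0}.Finite := by
  by_cases hα : α = 0
  · simp [hα, h.resolve_left (not_not.2 hα)]
  · refine Set.Subsingleton.finite fun k hk l hl => Int.cast_injective (α := ℂ) ?_
    exact mul_left_cancel₀ hα (add_right_cancel (hk.trans hl.symm))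

lemma add_intCast_ne_zero {a : ℂ} (ha : ∀ n : ℤ, (n : ℂ) ≠ a) (i : ℤ) : a + i ≠ 0 := fun h =>
  ha (-i) (by push_cast; linear_combination -h)

lemma exists_qLabCoeff_ne_zero_ne_zero {a b : ℂ}
    (h : (∀ n : ℤ, (n : ℂ) ≠ a) ∨ (b ≠ 0 ∧ b ≠ 1)) (i j : ℤ) :
    ∃ k : ℤ, qLabCoeff a b i k ≠ 0 ∧ qLabCoeff a b k j ≠ 0 := by
  have hfirst : {k : ℤ | b * k + (a + (1 - b) * i) = 0}.Finite := by
    refine finite_setOf_mul_add_eq_zero ?_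
    rcases h with ha | ⟨hb, -⟩
    · by_cases hb : b = 0
      · simpa [hb] using add_intCast_ne_zero ha i
      · exact Or.inl hb
    · exact Or.inl hb
  have hsecond : {k : ℤ | (1 - b) * k + (a + b * j) = 0}.Finite := by
    refine finite_setOf_mul_add_eq_zero ?_
    rcases h with ha | ⟨-, hb⟩
    · by_cases hb : b = 1
      · simpa [hb] using add_intCast_ne_zero ha j
      · exact Or.inl (sub_ne_zero.2 (Ne.symm hb))
    · exact Or.inl (sub_ne_zero.2 (Ne.symm hb))
  obtain ⟨k, hk⟩ := (hfirst.union hsecond).infinite_compl.nonempty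
  simp only [Set.mem_compl_iff, Set.mem_union, Set.mem_ofPred_eq, not_or] at hk
  refine ⟨k, fun h => hk.1 ?_, fun h => hk.2 ?_⟩ <;> unfold qLabCoeff at h <;> linear_combination h

lemma aSub_eq_top_of_ne_bot {a b c₀ : ℂ}
    (h : (∀ n : ℤ, (n : ℂ) ≠ a) ∨ (b ≠ 0 ∧ b ≠ 1) ∨ c₀ ≠ 0) {W : Submodule ℂ (ℤ →₀ ℂ)}
    (hW : ASub a b c₀ W) (hne : W ≠ ⊥) : W = ⊤ := by
  obtain ⟨hL, hH, hgr⟩ := hW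
  obtain ⟨i, hi⟩ := hgr.exists_single_one_mem hne
  refine (Submodule.eq_top_iff_forall_basis_mem (b := Finsupp.basisSingleOne)).2 fun j => ?_
  rw [coe_basisSingleOne]
  rcases or_assoc.2 h with hcoeff | hc
  · obtain ⟨k, hik, hkj⟩ := exists_qLabCoeff_ne_zero_ne_zero hcoeff i j
    exact single_one_mem_of_qLabCoeff_ne_zero hL
      (single_one_mem_of_qLabCoeff_ne_zero hL hi hik) hkj
  · have := hH (j - i) _ hi
    rwa [qHc_single, sub_add_cancel, W.smul_mem_iff hc] at this

lemma exists_aSub_ne_bot_ne_top {a b : ℂ} (n : ℤ) (ha : (n : ℂ) = a) (hb : b = 0 ∨ b = 1) :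
    ∃ W, ASub a b 0 W ∧ W ≠ ⊥ ∧ W ≠ ⊤ := by
  obtain ⟨s, hs, ⟨i, hi⟩, ⟨j, hj⟩⟩ : ∃ s : Set ℤ,
      (∀ m, ∀ i ∈ s, m + i ∉ s → a + b * m + i = 0) ∧ s.Nonempty ∧ sᶜ.Nonempty := by
    subst ha
    rcases hb with rfl | rfl
    · refine ⟨{-n}, fun m i hi _ => ?_, ⟨-n, rfl⟩, ⟨-n + 1, by simp⟩⟩
      rw [Set.mem_singleton_iff.1 hi]
      push_cast
      ring
    · refine ⟨{-n}ᶜ, fun m i _ hmi => ?_, ⟨-n + 1, by simp⟩, ⟨-n, by simp⟩⟩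
      have : ((m + i : ℤ) : ℂ) = -n := by rw [not_not.1 hmi]; push_cast; ring
      push_cast at this
      linear_combination this
  refine ⟨supported ℂ ℂ s, aSub_supported hs, fun hbot => ?_, fun htop => ?_⟩
  · have := single_one_mem_supported_iff (R := ℂ) |>.2 hi
    simp [hbot] at this
  · exact hj (single_one_mem_supported_iff.1 (htop ▸ Submodule.mem_top))

/-- the 𝔮-module `A_{a,b,c₀}` is simple (its only submodules are
`0` and itself) if and only if `a ∉ ℤ`, or `b ∉ {0, 1}`, or `c₀ ≠ 0`. -/
theorem stmt15 (a b c₀ : ℂ) :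
    (∀ W : Submodule ℂ (ℤ →₀ ℂ), ASub a b c₀ W → W = ⊥ ∨ W = ⊤) ↔
      ((∀ n : ℤ, (n : ℂ) ≠ a) ∨ (b ≠ 0 ∧ b ≠ 1) ∨ c₀ ≠ 0) := by
  refine ⟨fun hsimple => ?_, fun h W hW => or_iff_not_imp_left.2 (aSub_eq_top_of_ne_bot h hW)⟩
  by_contra! hcon
  obtain ⟨⟨n, hn⟩, hb, rfl⟩ := hcon
  obtain ⟨W, hW, hbot, htop⟩ := exists_aSub_ne_bot_ne_top n hn (or_iff_not_imp_left.2 hb)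
  exact (hsimple W hW).elim hbot htop
end
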